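/- For every l ≥ 1, the arithmetic function a_l counting unordered factorizations into parts ≥ 2 using exactly l colors equals the l-fold Dirichlet convolution of f̄ with itself, where f̄(1) = 0 and f̄(n) = f(n) for n ≥ 2 with f(n) the number of unordered factorizations of n into parts ≥ 2. -/

import Mathlib

/-- Number of unordered factorizations of `n` into parts `≥ 2`
(multisets of integers `≥ 2` with product `n`); `ufac 1 = 1`. -/
noncomputable def ufac (n : ℕ) : ℕ :=
  Set.ncard {s : Multiset ℕ | (∀ d ∈ s, 2 ≤ d) ∧ s.prod = n}

/-- `aExact l n`: number of unordered factorizations of `n` into parts `≥ 2`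
using exactly `l` colors (every color in `{0,…,l-1}` occurs). -/
noncomputable def aExact (l n : ℕ) : ℕ :=
  Set.ncard {s : Multiset (ℕ × ℕ) |
    (∀ p ∈ s, 2 ≤ p.1 ∧ p.2 < l) ∧ (∀ c < l, ∃ p ∈ s, p.2 = c) ∧
    (s.map Prod.fst).prod = n}

/-- Dirichlet convolution of two arithmetic functions. -/
def dconv (g h : ℕ → ℕ) (n : ℕ) : ℕ :=
  ∑ d ∈ n.divisors, g d * h (n / d)

/-- `dirPow g l` : the `l`-fold Dirichlet convolution of `g` with itself,
with `dirPow g 1 = g`. -/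
def dirPow (g : ℕ → ℕ) : ℕ → ℕ → ℕ
  | 0 => fun n => if n = 1 then 1 else 0
  | 1 => g
  | (l + 2) => dconv (dirPow g (l + 1)) g

/-!
Induct on `l`. Taking out the parts of the last colour `l` from a factorization of `n` that uses
all colours `0, …, l` leaves a factorization of some divisor `d` of `n` using all colours `< l`,
and the removed parts form a nonempty uncoloured factorization of `n / d`; this splitting is a
bijection, so `a_{l+1} = a_l * f̄`. For `l = 0` only the empty multiset qualifies, so `a_0` is the
unit of Dirichlet convolution, which also covers the step from `l = 0` to `l = 1`.
-/

namespace Multiset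

variable {α : Type*}

theorem le_card_nsmul_val [DecidableEq α] {s : Multiset α} {A : Finset α}
    (h : ∀ x ∈ s, x ∈ A) : s ≤ card s • A.val := by
  refine le_iff_count.2 fun a => ?_
  by_cases ha : a ∈ s
  · rw [count_nsmul, count_eq_one_of_mem A.nodup (h a ha), mul_one]
    exact count_le_card a s
  · simp [count_eq_zero.2 ha]

theorem finite_setOf_forall_mem_card_le (A : Finset α) (k : ℕ) :
    {s : Multiset α | (∀ x ∈ s, x ∈ A) ∧ card s ≤ k}.Finite := by
  classical
  refine (Set.finite_Iic (k • A.val)).subset fun s ⟨hA, hk⟩ => ?_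
  exact (le_card_nsmul_val hA).trans (nsmul_le_nsmul_left (zero_le _) hk)

theorem card_lt_prod_of_two_le {s : Multiset ℕ} (h : ∀ x ∈ s, 2 ≤ x) : card s < s.prod :=
  Nat.lt_two_pow_self.trans_le (pow_card_le_prod h)

end Multiset

def factorizations (n : ℕ) : Set (Multiset ℕ) :=
  {s | (∀ d ∈ s, 2 ≤ d) ∧ s.prod = n}

def fullyColoredFactorizations (l n : ℕ) : Set (Multiset (ℕ × ℕ)) :=
  {s | (∀ p ∈ s, 2 ≤ p.1 ∧ p.2 < l) ∧ (∀ c < l, ∃ p ∈ s, p.2 = c) ∧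
    (s.map Prod.fst).prod = n}

theorem ufac_eq_ncard (n : ℕ) : ufac n = (factorizations n).ncard := rfl

theorem aExact_eq_ncard (l n : ℕ) : aExact l n = (fullyColoredFactorizations l n).ncard := rfl

theorem factorizations_finite {n : ℕ} (hn : n ≠ 0) : (factorizations n).Finite := by
  refine (Multiset.finite_setOf_forall_mem_card_le n.divisors n).subset fun s ⟨h2, hprod⟩ => ?_
  refine ⟨fun d hd => ?_, ?_⟩
  · exact Nat.mem_divisors.2 ⟨hprod ▸ Multiset.dvd_prod hd, hn⟩
  · exact hprod ▸ (Multiset.card_lt_prod_of_two_le h2).le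

theorem fullyColoredFactorizations_finite (l : ℕ) {n : ℕ} (hn : n ≠ 0) :
    (fullyColoredFactorizations l n).Finite := by
  refine (Multiset.finite_setOf_forall_mem_card_le (n.divisors ×ˢ Finset.range l) n).subset
    fun s ⟨hs, _, hprod⟩ => ?_
  have h2 : ∀ d ∈ s.map Prod.fst, 2 ≤ d := by
    simp only [Multiset.mem_map]
    rintro _ ⟨p, hp, rfl⟩
    exact (hs p hp).1
  refine ⟨fun p hp => ?_, ?_⟩
  · have hdvd : p.1 ∣ n := hprod ▸ Multiset.dvd_prod (Multiset.mem_map_of_mem _ hp)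
    simpa [hn, hdvd] using (hs p hp).2
  · simpa [hprod] using (Multiset.card_lt_prod_of_two_le h2).le

theorem ncard_factorizations_diff_zero (n : ℕ) :
    (factorizations n \ {0}).ncard = if n = 1 then 0 else ufac n := by
  split_ifs with h
  · subst h
    have hone : factorizations 1 ⊆ {0} := fun s ⟨h2, hprod⟩ => by
      have := Multiset.card_lt_prod_of_two_le h2
      rwa [hprod, Nat.lt_one_iff, Multiset.card_eq_zero] at this
    rw [Set.sdiff_eq_empty.2 hone, Set.ncard_empty]
  · rw [Set.sdiff_singleton_eq_self fun h0 => h h0.2.symm, ufac_eq_ncard]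

theorem aExact_zero (n : ℕ) : aExact 0 n = if n = 1 then 1 else 0 := by
  have hzero : ∀ s ∈ fullyColoredFactorizations 0 n, s = 0 := fun s hs =>
    Multiset.eq_zero_of_forall_notMem fun p hp => Nat.not_lt_zero _ (hs.1 p hp).2
  rw [aExact_eq_ncard]
  split_ifs with h
  · rw [Set.ncard_eq_one]
    refine ⟨0, Set.eq_singleton_iff_unique_mem.2 ⟨?_, hzero⟩⟩
    simp [fullyColoredFactorizations, h]
  · have hempty : fullyColoredFactorizations 0 n = ∅ :=
      Set.eq_empty_of_forall_notMem fun s hs => h (by simpa [hzero s hs] using hs.2.2.symm)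
    rw [hempty, Set.ncard_empty]

section SplitColor

variable (l : ℕ)

def splitColor (s : Multiset (ℕ × ℕ)) : Multiset (ℕ × ℕ) × Multiset ℕ :=
  (s.filter (·.2 ≠ l), (s.filter (·.2 = l)).map Prod.fst)

def joinColor (x : Multiset (ℕ × ℕ) × Multiset ℕ) : Multiset (ℕ × ℕ) :=
  x.1 + x.2.map (·, l)

theorem joinColor_splitColor (s : Multiset (ℕ × ℕ)) : joinColor l (splitColor l s) = s := by
  have hcolor : ∀ p ∈ s.filter (·.2 = l), (p.1, l) = p := fun p hp =>
    Prod.ext rfl (Multiset.of_mem_filter hp).symm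
  rw [joinColor, splitColor, Multiset.map_map, Function.comp_def, Multiset.map_congr rfl hcolor,
    Multiset.map_id', add_comm, Multiset.filter_add_not]

theorem splitColor_injective : Function.Injective (splitColor l) :=
  Function.LeftInverse.injective (joinColor_splitColor l)

theorem splitColor_joinColor {a : Multiset (ℕ × ℕ)} (ha : ∀ p ∈ a, p.2 ≠ l)
    (b : Multiset ℕ) :
    splitColor l (joinColor l (a, b)) = (a, b) := by
  simp [splitColor, joinColor, Multiset.filter_add, Multiset.filter_eq_self.2 ha,
    Multiset.filter_eq_nil.2 ha, Multiset.filter_map]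

theorem prod_map_fst_joinColor (x : Multiset (ℕ × ℕ) × Multiset ℕ) :
    ((joinColor l x).map Prod.fst).prod = (x.1.map Prod.fst).prod * x.2.prod := by
  simp [joinColor, Multiset.map_map]

end SplitColor

theorem mapsTo_splitColor (l : ℕ) {n : ℕ} (hn : n ≠ 0) :
    Set.MapsTo (splitColor l) (fullyColoredFactorizations (l + 1) n)
      (⋃ d ∈ n.divisors,
        fullyColoredFactorizations l d ×ˢ (factorizations (n / d) \ {0})) := by
  rintro s ⟨hparts, hcover, hprod⟩
  set d := ((splitColor l s).1.map Prod.fst).prod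
  have hsplit : d * (splitColor l s).2.prod = n := by
    rw [← prod_map_fst_joinColor, joinColor_splitColor, hprod]
  have hd : d ≠ 0 := left_ne_zero_of_mul (hsplit ▸ hn)
  refine Set.mem_biUnion (Nat.mem_divisors.2 ⟨Dvd.intro _ hsplit, hn⟩)
    ⟨⟨?_, ?_, rfl⟩, ⟨?_, ?_⟩, ?_⟩
  · intro p hp
    obtain ⟨hps, hpl⟩ := Multiset.mem_filter.1 hp
    exact ⟨(hparts p hps).1, by have := (hparts p hps).2; omega⟩
  · intro c hc
    obtain ⟨p, hps, hpc⟩ := hcover c (by omega)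
    exact ⟨p, Multiset.mem_filter.2 ⟨hps, by omega⟩, hpc⟩
  · simp only [splitColor, Multiset.mem_map, Multiset.mem_filter]
    rintro _ ⟨p, ⟨hps, -⟩, rfl⟩
    exact (hparts p hps).1
  · rw [← hsplit, Nat.mul_div_cancel_left _ (Nat.pos_of_ne_zero hd)]
  · obtain ⟨p, hps, hpl⟩ := hcover l l.lt_succ_self
    exact ne_of_mem_of_not_mem'
      (Multiset.mem_map_of_mem _ (Multiset.mem_filter.2 ⟨hps, hpl⟩)) (Multiset.notMem_zero _)

theorem joinColor_mem {l d m : ℕ} {a : Multiset (ℕ × ℕ)} {b : Multiset ℕ}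
    (ha : a ∈ fullyColoredFactorizations l d) (hb : b ∈ factorizations m \ {0}) :
    joinColor l (a, b) ∈ fullyColoredFactorizations (l + 1) (d * m) := by
  obtain ⟨haparts, hacover, haprod⟩ := ha
  obtain ⟨⟨hbparts, hbprod⟩, hb0⟩ := hb
  refine ⟨fun p hp => ?_, fun c hc => ?_, by rw [prod_map_fst_joinColor, haprod, hbprod]⟩
  · rcases Multiset.mem_add.1 hp with hp | hp
    · exact ⟨(haparts p hp).1, Nat.lt_succ_of_lt (haparts p hp).2⟩
    · obtain ⟨k, hk, rfl⟩ := Multiset.mem_map.1 hp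
      exact ⟨hbparts k hk, l.lt_succ_self⟩
  · rcases Nat.lt_succ_iff_lt_or_eq.1 hc with hc | rfl
    · obtain ⟨p, hp, hpc⟩ := hacover c hc
      exact ⟨p, Multiset.mem_add.2 (Or.inl hp), hpc⟩
    · obtain ⟨k, hk⟩ := Multiset.exists_mem_of_ne_zero hb0
      exact ⟨(k, c), Multiset.mem_add.2 (Or.inr (Multiset.mem_map_of_mem _ hk)), rfl⟩

theorem splitColor_bijOn (l : ℕ) {n : ℕ} (hn : n ≠ 0) :
    Set.BijOn (splitColor l) (fullyColoredFactorizations (l + 1) n)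
      (⋃ d ∈ n.divisors,
        fullyColoredFactorizations l d ×ˢ (factorizations (n / d) \ {0})) := by
  refine ⟨mapsTo_splitColor l hn, (splitColor_injective l).injOn, fun x hx => ?_⟩
  obtain ⟨d, hd, ha, hb⟩ := Set.mem_iUnion₂.1 hx
  refine ⟨joinColor l x, ?_, splitColor_joinColor l (fun p hp => (ha.1 p hp).2.ne) x.2⟩
  simpa [Nat.mul_div_cancel' (Nat.dvd_of_mem_divisors hd)] using joinColor_mem ha hb

theorem aExact_succ (l : ℕ) {n : ℕ} (hn : n ≠ 0) :
    aExact (l + 1) n = dconv (aExact l) (fun m => if m = 1 then 0 else ufac m) n := by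
  have hfinite : ∀ d ∈ (n.divisors : Set ℕ),
      (fullyColoredFactorizations l d ×ˢ (factorizations (n / d) \ {0})).Finite := fun d hd => by
    have hd0 := Nat.pos_of_mem_divisors hd
    exact (fullyColoredFactorizations_finite l hd0.ne').prod
      (factorizations_finite (Nat.div_pos (Nat.divisor_le hd) hd0).ne').sdiff
  have hdisjoint : (n.divisors : Set ℕ).PairwiseDisjoint
      fun d => fullyColoredFactorizations l d ×ˢ (factorizations (n / d) \ {0}) :=
    fun d _ d' _ hne => Set.disjoint_prod.2 <| Or.inl <|
      Set.disjoint_left.2 fun s hs hs' => hne (hs.2.2.symm.trans hs'.2.2)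
  rw [aExact_eq_ncard, (splitColor_bijOn l hn).ncard_eq, ← Finset.set_biUnion_coe,
    n.divisors.finite_toSet.ncard_biUnion hfinite hdisjoint, finsum_mem_coe_finset, dconv]
  refine Finset.sum_congr rfl fun d _ => ?_
  rw [Set.ncard_prod, ncard_factorizations_diff_zero, aExact_eq_ncard]

theorem dirPow_succ (g : ℕ → ℕ) (l : ℕ) {n : ℕ} (hn : n ≠ 0) :
    dirPow g (l + 1) n = dconv (dirPow g l) g n := by
  cases l with
  | zero => simp [dirPow, dconv, hn]
  | succ l => rfl

theorem aExact_eq_dirichlet_power_general (l : ℕ) :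
    ∀ n : ℕ, 1 ≤ n →
      aExact l n = dirPow (fun m => if m = 1 then 0 else ufac m) l n := by
  induction l with
  | zero => exact fun n _ => aExact_zero n
  | succ l ih =>
    intro n hn
    rw [aExact_succ l (by omega), dirPow_succ _ l (by omega)]
    exact Finset.sum_congr rfl fun d hd => by rw [ih d (Nat.pos_of_mem_divisors hd)]

theorem aExact_eq_dirichlet_power (l : ℕ) (hl : 1 ≤ l) :
    ∀ n : ℕ, 1 ≤ n →
      aExact l n = dirPow (fun m => if m = 1 then 0 else ufac m) l n :=
  aExact_eq_dirichlet_power_general l
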